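/- Stationarity of the inactive-state probabilities: let μ⁰ > 0, μ¹ ≥ 0, γ > 0, ν > 0 be reals, and set a = μ⁰/(1+μ¹), b = (μ⁰+γ)/(1+μ¹), θ = 1/(1+μ¹), C = M(a, b, ν(1−θ)). Then for every n ∈ ℕ, the steady-state probabilities satisfy 0 = (n+1)·P_{0,n+1} − n·P_{0,n} − (μ⁰ + μ¹ n)·P_{0,n} + γ·P_{1,n}. -/

import Mathlib

open scoped BigOperators

/-- Pochhammer symbol `(a)ₙ = a(a+1)⋯(a+n−1)`, `(a)₀ = 1`. -/
noncomputable def poch (a : ℝ) (n : ℕ) : ℝ := ∏ k ∈ Finset.range n, (a + k)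

/-- Kummer's confluent hypergeometric function `M(a,b,z)`. -/
noncomputable def kummerM (a b z : ℝ) : ℝ :=
  ∑' k : ℕ, poch a k / poch b k * z ^ k / (Nat.factorial k : ℝ)

/-- Steady-state probability `P_{0,n}` of the binary gene model. -/
noncomputable def P0 (a b ν θ : ℝ) (n : ℕ) : ℝ :=
  (b - a) / (kummerM a b (ν * (1 - θ)) * b) * (ν ^ n / (Nat.factorial n : ℝ)) *
    (poch a n / poch (1 + b) n) * kummerM (a + n) (1 + b + n) (-(ν * θ))

/-- Steady-state probability `P_{1,n}` of the binary gene model. -/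
noncomputable def P1 (a b ν θ : ℝ) (n : ℕ) : ℝ :=
  a / (kummerM a b (ν * (1 - θ)) * b) * (ν ^ n / (Nat.factorial n : ℝ)) *
    (poch (1 + a) n / poch (1 + b) n) * kummerM (1 + a + n) (1 + b + n) (-(ν * θ))


lemma poch_succ (x : ℝ) (n : ℕ) : poch x (n+1) = poch x n * (x + n) := by
  simp [poch, Finset.prod_range_succ]

lemma poch_succ' (x : ℝ) (n : ℕ) : poch x (n+1) = x * poch (x+1) n := by
  rw [poch, Finset.prod_range_succ', mul_comm]
  have : ∀ k ∈ Finset.range n, (x + ((k:ℕ):ℝ) + 1) = (x + 1 + (k:ℝ)) := by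
    intro k _; ring
  simp only [poch, Nat.cast_add, Nat.cast_one, Nat.cast_zero, add_zero]
  congr 1
  apply Finset.prod_congr rfl
  intro k _
  ring

lemma poch_pos (x : ℝ) (hx : 0 < x) (n : ℕ) : 0 < poch x n := by
  apply Finset.prod_pos
  intro k _
  positivity

lemma poch_le (A B : ℝ) (hA : 0 < A) (hB : 0 < B) (k : ℕ) :
    poch A k ≤ (max 1 (A/B))^k * poch B k := by
  set m := max 1 (A/B) with hm
  have hm1 : 1 ≤ m := le_max_left _ _
  have hmB : A ≤ m * B := by
    calc A = A/B*B := by field_simp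
    _ ≤ m*B := mul_le_mul_of_nonneg_right (le_max_right _ _) hB.le
  induction k with
  | zero => simp [poch]
  | succ k ih =>
    have hk0 : (0:ℝ) ≤ (k:ℝ) := k.cast_nonneg
    rw [poch_succ, poch_succ, pow_succ]
    calc poch A k * (A + k) ≤ (m^k * poch B k) * (m * (B + k)) := by
          apply mul_le_mul ih ?_ (by linarith) ?_
          · have : (k:ℝ) ≤ m * k := le_mul_of_one_le_left k.cast_nonneg hm1
            rw [mul_add]; linarith
          · have := poch_pos B hB k
            have : (0:ℝ) < m ^ k := by positivity
            positivity
    _ = m^k * m * (poch B k * (B + k)) := by ring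

lemma kummer_summable (A B z : ℝ) (hA : 0 < A) (hB : 0 < B) :
    Summable (fun k : ℕ => poch A k / poch B k * z ^ k / (Nat.factorial k : ℝ)) := by
  set m := max 1 (A/B) with hm
  have hm0 : 0 < m := lt_of_lt_of_le one_pos (le_max_left _ _)
  apply Summable.of_norm
  apply Summable.of_nonneg_of_le (fun k => norm_nonneg _) ?_
    (Real.summable_pow_div_factorial (m * |z|))
  intro k
  have hpA := poch_pos A hA k
  have hpB := poch_pos B hB k
  have hf : (0:ℝ) < (Nat.factorial k : ℝ) := by positivity
  rw [Real.norm_eq_abs, abs_div, abs_mul, abs_div, abs_pow,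
    abs_of_pos hpA, abs_of_pos hpB, abs_of_pos hf, mul_pow]
  have h1 : poch A k / poch B k ≤ m ^ k := by
    rw [div_le_iff₀ hpB]; exact poch_le A B hA hB k
  gcongr

lemma kummer_contiguous (A B z : ℝ) (hA : 0 < A) (hB : 0 < B) :
    kummerM A B z - kummerM (A+1) B z = -(z/B) * kummerM (A+1) (B+1) z := by
  have hf := kummer_summable A B z hA hB
  have hg := kummer_summable (A+1) B z (by linarith) hB
  have hh := kummer_summable (A+1) (B+1) z (by linarith) (by linarith)
  unfold kummerM
  rw [← Summable.tsum_sub hf hg]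
  have hd := hf.sub hg
  rw [Summable.tsum_eq_zero_add hd]
  have h0 : poch A 0 / poch B 0 * z ^ 0 / (Nat.factorial 0 : ℝ)
      - poch (A+1) 0 / poch B 0 * z ^ 0 / (Nat.factorial 0 : ℝ) = 0 := by
    simp [poch]
  rw [h0, zero_add]
  have hterm : ∀ k : ℕ,
      poch A (k+1) / poch B (k+1) * z ^ (k+1) / (Nat.factorial (k+1) : ℝ)
      - poch (A+1) (k+1) / poch B (k+1) * z ^ (k+1) / (Nat.factorial (k+1) : ℝ)
      = -(z/B) * (poch (A+1) k / poch (B+1) k * z ^ k / (Nat.factorial k : ℝ)) := by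
    intro k
    have hQ := (poch_pos (B+1) (by linarith) k).ne'
    have hF : ((Nat.factorial k : ℝ)) ≠ 0 := by positivity
    have hk1 : ((k:ℝ)+1) ≠ 0 := by positivity
    rw [poch_succ' A k, poch_succ (A+1) k, poch_succ' B k, Nat.factorial_succ,
      pow_succ]
    push_cast
    field_simp
    ring
  rw [tsum_congr hterm, tsum_mul_left]

set_option maxHeartbeats 4000000 in
/-- Stationarity of the inactive-state probabilities. -/
theorem inactive_state_stationary (μ0 μ1 γ ν : ℝ) (hμ0 : 0 < μ0) (hμ1 : 0 ≤ μ1)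
    (hγ : 0 < γ) (hν : 0 < ν)
    (a b θ : ℝ) (ha : a = μ0 / (1 + μ1)) (hb : b = (μ0 + γ) / (1 + μ1))
    (hθ : θ = 1 / (1 + μ1)) (n : ℕ) :
    0 = ((n : ℝ) + 1) * P0 a b ν θ (n + 1) - (n : ℝ) * P0 a b ν θ n
        - (μ0 + μ1 * n) * P0 a b ν θ n + γ * P1 a b ν θ n := by
  subst hθ
  have h1 : (0:ℝ) < 1 + μ1 := by linarith
  have ha0 : 0 < a := by rw [ha]; positivity
  have hb0 : 0 < b := by rw [hb]; positivity
  have hμ0' : μ0 = a * (1 + μ1) := by rw [ha]; field_simp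
  have hγ' : γ = (b - a) * (1 + μ1) := by
    rw [ha, hb]; field_simp; ring
  have hB0 : (0:ℝ) < 1 + b + n := by positivity
  have hA0 : (0:ℝ) < a + n := by positivity
  have hcont := kummer_contiguous (a + n) (1 + b + n) (-(ν * (1/(1+μ1)))) hA0 hB0
  have hM1 : kummerM (a + n + 1) (1 + b + n) (-(ν * (1/(1+μ1))))
      = kummerM (a + n) (1 + b + n) (-(ν * (1/(1+μ1))))
        - (ν * (1/(1+μ1)) / (1 + b + n)) * kummerM (a + n + 1) (1 + b + n + 1) (-(ν * (1/(1+μ1)))) := by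
    linear_combination -hcont
  have hpa : poch (a+1) n = poch a n * (a + n) / a := by
    rw [eq_div_iff ha0.ne']
    linear_combination poch_succ a n - poch_succ' a n
  set K := (kummerM a b (ν * (1 - 1/(1+μ1))) * b)⁻¹ with hK
  have e0 : ∀ m : ℕ, P0 a b ν (1/(1+μ1)) m
      = K * ((b - a) * (ν ^ m / (Nat.factorial m : ℝ)) * (poch a m / poch (1 + b) m)
          * kummerM (a + m) (1 + b + m) (-(ν * (1/(1+μ1))))) := by
    intro m
    unfold P0
    rw [hK, div_eq_mul_inv]
    ring
  have e1 : P1 a b ν (1/(1+μ1)) n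
      = K * (a * (ν ^ n / (Nat.factorial n : ℝ)) * (poch (1 + a) n / poch (1 + b) n)
          * kummerM (1 + a + n) (1 + b + n) (-(ν * (1/(1+μ1))))) := by
    unfold P1
    rw [hK, div_eq_mul_inv]
    ring
  rw [e0, e0, e1]
  have hP : poch (1 + b) n ≠ 0 := (poch_pos _ (by linarith) n).ne'
  have hF : ((Nat.factorial n : ℝ)) ≠ 0 := by positivity
  have hn1 : ((n:ℝ) + 1) ≠ 0 := by positivity
  have hX : 0 = ((n : ℝ) + 1) * ((b - a) * (ν ^ (n+1) / (Nat.factorial (n+1) : ℝ))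
          * (poch a (n+1) / poch (1 + b) (n+1))
          * kummerM (a + (n+1 : ℕ)) (1 + b + (n+1 : ℕ)) (-(ν * (1/(1+μ1)))))
      - (n : ℝ) * ((b - a) * (ν ^ n / (Nat.factorial n : ℝ)) * (poch a n / poch (1 + b) n)
          * kummerM (a + n) (1 + b + n) (-(ν * (1/(1+μ1)))))
      - (μ0 + μ1 * n) * ((b - a) * (ν ^ n / (Nat.factorial n : ℝ)) * (poch a n / poch (1 + b) n)
          * kummerM (a + n) (1 + b + n) (-(ν * (1/(1+μ1)))))
      + γ * (a * (ν ^ n / (Nat.factorial n : ℝ)) * (poch (1 + a) n / poch (1 + b) n)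
          * kummerM (1 + a + n) (1 + b + n) (-(ν * (1/(1+μ1))))) := by
    rw [show (1:ℝ) + a = a + 1 from by ring, hpa]
    push_cast
    rw [show a + ((n:ℝ) + 1) = a + n + 1 from by ring,
        show (1:ℝ) + b + ((n:ℝ) + 1) = 1 + b + n + 1 from by ring,
        show a + 1 + (n:ℝ) = a + n + 1 from by ring,
        hM1, poch_succ a n, poch_succ (1+b) n, Nat.factorial_succ, hμ0', hγ']
    push_cast
    field_simp
    ring
  push_cast at hX ⊢
  linear_combination K * hX
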